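/- Let γ ∈ ℝ, Δ_s = Φ⁻¹(s + (1−s)Φ(γ)), and c_{y,k}(θ,σ) = a·Δ_a^k + ∫_a^{1−b} Δ_s^k ds + b·Δ_{1−b}^k where γ = (t−θ)/σ. Then ∂c_{y,k}/∂a = a(1 − Φ(γ))·kΔ_a^{k−1}/φ(Δ_a) and ∂c_{y,k}/∂b = −b(1 − Φ(γ))·kΔ_{1−b}^{k−1}/φ(Δ_{1−b}). -/

import Mathlib

open MeasureTheory ProbabilityTheory Set Filter

noncomputable def stdPhi (x : ℝ) : ℝ :=
  ∫ t in Set.Iic x, Real.exp (-t ^ 2 / 2) / Real.sqrt (2 * Real.pi)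

noncomputable def stdphi (x : ℝ) : ℝ := Real.exp (-x ^ 2 / 2) / Real.sqrt (2 * Real.pi)

open scoped Topology

/-! The derivative of the inverse normal cdf `Φ⁻¹` at `v` is `1 / φ(Φ⁻¹ v)`, so by the chain rule
`Δ' s = (1 - Φ γ) / φ(Δ s)`. In `a ↦ a Δ_a^k + ∫_a^{1-b} Δ_s^k ds` the product rule produces
`Δ_a^k + a (Δ^k)'(a)` and the fundamental theorem of calculus `-Δ_a^k`, leaving `a (Δ^k)'(a)`;
the derivative in `b` is the mirror image. -/

lemma stdphi_eq_gaussianPDFReal : stdphi = gaussianPDFReal 0 1 := by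
  ext x
  simp [stdphi, gaussianPDFReal, div_eq_inv_mul]

lemma stdphi_pos (x : ℝ) : 0 < stdphi x := by
  unfold stdphi
  positivity

lemma continuous_stdphi : Continuous stdphi := by
  unfold stdphi
  fun_prop

lemma integrable_stdphi : Integrable stdphi := by
  rw [stdphi_eq_gaussianPDFReal]
  exact integrable_gaussianPDFReal 0 1

lemma integral_stdphi : ∫ x, stdphi x = 1 := by
  rw [stdphi_eq_gaussianPDFReal]
  exact integral_gaussianPDFReal_eq_one 0 one_ne_zero

lemma stdPhi_eq_setIntegral (x : ℝ) : stdPhi x = ∫ t in Iic x, stdphi t := rfl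

lemma hasDerivAt_stdPhi (x : ℝ) : HasDerivAt stdPhi (stdphi x) x := by
  have hFTC : HasDerivAt (fun u => stdPhi 0 + ∫ t in (0 : ℝ)..u, stdphi t) (stdphi x) x :=
    (intervalIntegral.integral_hasDerivAt_right integrable_stdphi.intervalIntegrable
      (continuous_stdphi.stronglyMeasurableAtFilter _ _) continuous_stdphi.continuousAt).const_add _
  refine hFTC.congr_of_eventuallyEq (Eventually.of_forall fun u => ?_)
  beta_reduce
  rw [stdPhi_eq_setIntegral, stdPhi_eq_setIntegral, ← intervalIntegral.integral_Iic_sub_Iic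
    integrable_stdphi.integrableOn integrable_stdphi.integrableOn]
  ring

lemma strictMono_stdPhi : StrictMono stdPhi :=
  strictMono_of_hasDerivAt_pos hasDerivAt_stdPhi stdphi_pos

lemma stdPhi_pos (x : ℝ) : 0 < stdPhi x :=
  calc 0 ≤ stdPhi (x - 1) := setIntegral_nonneg measurableSet_Iic fun t _ => (stdphi_pos t).le
    _ < stdPhi x := strictMono_stdPhi (by linarith)

lemma stdPhi_lt_one (x : ℝ) : stdPhi x < 1 :=
  calc stdPhi x < stdPhi (x + 1) := strictMono_stdPhi (by linarith)
    _ ≤ 1 := integral_stdphi ▸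
      setIntegral_le_integral integrable_stdphi (Eventually.of_forall fun t => (stdphi_pos t).le)

lemma stdPhi_mem_Ioo (x : ℝ) : stdPhi x ∈ Ioo 0 1 := ⟨stdPhi_pos x, stdPhi_lt_one x⟩

lemma StrictMono.monotoneOn_of_rightInvOn {α β : Type*} [LinearOrder α] [Preorder β]
    {f : α → β} {g : β → α} {s : Set β} (hf : StrictMono f) (hg : RightInvOn g f s) :
    MonotoneOn g s := by
  intro v hv w hw hvw
  by_contra! hlt
  have := hf hlt
  rw [hg hw, hg hv] at this
  exact this.not_ge hvw

lemma StrictMono.image_eq_univ_of_rightInvOn {α β : Type*} [LinearOrder α] [Preorder β]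
    {f : α → β} {g : β → α} {s : Set β} (hf : StrictMono f) (hg : RightInvOn g f s)
    (hfs : ∀ x, f x ∈ s) : g '' s = univ :=
  eq_univ_of_forall fun x => ⟨f x, hfs x, hf.injective (hg (hfs x))⟩

/-- Continuity of `g`, needed for the inverse function rule, holds because `g` is monotone on `s`
and maps `s` onto the whole line. -/
lemma StrictMono.hasDerivAt_of_rightInvOn {f g : ℝ → ℝ} {s : Set ℝ} {f' v : ℝ}
    (hf : StrictMono f) (hg : RightInvOn g f s) (hfs : ∀ x, f x ∈ s) (hs : IsOpen s)
    (hv : v ∈ s) (hf' : HasDerivAt f f' (g v)) (hf'0 : f' ≠ 0) : HasDerivAt g f'⁻¹ v := by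
  have hcont : ContinuousAt g v :=
    continuousAt_of_monotoneOn_of_image_mem_nhds (hf.monotoneOn_of_rightInvOn hg)
      (hs.mem_nhds hv) (by rw [hf.image_eq_univ_of_rightInvOn hg hfs]; exact univ_mem)
  exact hf'.of_local_left_inverse hcont hf'0 (eventually_of_mem (hs.mem_nhds hv) hg)

lemma hasDerivAt_of_rightInvOn_stdPhi {Φinv : ℝ → ℝ} (hΦinv : RightInvOn Φinv stdPhi (Ioo 0 1))
    {v : ℝ} (hv : v ∈ Ioo 0 1) : HasDerivAt Φinv (stdphi (Φinv v))⁻¹ v :=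
  strictMono_stdPhi.hasDerivAt_of_rightInvOn hΦinv stdPhi_mem_Ioo isOpen_Ioo hv
    (hasDerivAt_stdPhi _) (stdphi_pos _).ne'

lemma add_one_sub_mul_mem_Ioo {c s : ℝ} (hc0 : 0 ≤ c) (hc1 : c < 1) (hs : s ∈ Ioo 0 1) :
    s + (1 - s) * c ∈ Ioo 0 1 := by
  obtain ⟨hs0, hs1⟩ := hs
  constructor <;> nlinarith

lemma hasDerivAt_rightInvOn_stdPhi_comp {Φinv : ℝ → ℝ}
    (hΦinv : RightInvOn Φinv stdPhi (Ioo 0 1)) {c s : ℝ} (hc0 : 0 ≤ c) (hc1 : c < 1)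
    (hs : s ∈ Ioo 0 1) :
    HasDerivAt (fun s => Φinv (s + (1 - s) * c))
      ((1 - c) / stdphi (Φinv (s + (1 - s) * c))) s := by
  have hinner : HasDerivAt (fun s : ℝ => s + (1 - s) * c) (1 - c) s :=
    ((hasDerivAt_id' s).add (((hasDerivAt_id' s).const_sub 1).mul_const c)).congr_deriv
      (by ring)
  have := (hasDerivAt_of_rightInvOn_stdPhi hΦinv (add_one_sub_mul_mem_Ioo hc0 hc1 hs)).comp s hinner
  rwa [mul_comm, ← div_eq_mul_inv] at this

lemma hasDerivAt_mul_self_add_integral {F : ℝ → ℝ} {F' a c : ℝ} (hF : HasDerivAt F F' a)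
    (hint : IntervalIntegrable F volume a c) (hmeas : StronglyMeasurableAtFilter F (𝓝 a)) :
    HasDerivAt (fun x => x * F x + ∫ s in x..c, F s) (a * F') a :=
  (((hasDerivAt_id' a).mul hF).add
    (intervalIntegral.integral_hasDerivAt_left hint hmeas hF.continuousAt)).congr_deriv (by ring)

lemma hasDerivAt_integral_add_mul_self_one_sub {F : ℝ → ℝ} {F' b c : ℝ}
    (hF : HasDerivAt F F' (1 - b)) (hint : IntervalIntegrable F volume c (1 - b))
    (hmeas : StronglyMeasurableAtFilter F (𝓝 (1 - b))) :
    HasDerivAt (fun y => (∫ s in c..(1 - y), F s) + y * F (1 - y)) (-(b * F')) b := by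
  have hrefl : HasDerivAt (fun y : ℝ => 1 - y) (-1) b := by
    simpa using (hasDerivAt_id' b).const_sub 1
  exact (((intervalIntegral.integral_hasDerivAt_right hint hmeas hF.continuousAt).comp b
    hrefl).add ((hasDerivAt_id' b).mul (hF.comp b hrefl))).congr_deriv
    (by rw [Function.comp_apply]; ring)

theorem stmt18_general (a b γ : ℝ) (k : ℕ)
    (ha : 0 < a) (hab : a < 1 - b) (hb1 : 1 - b < 1)
    (Φinv : ℝ → ℝ) (hΦinv : ∀ v ∈ Set.Ioo (0 : ℝ) 1, stdPhi (Φinv v) = v)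
    (Δ : ℝ → ℝ) (hΔ : ∀ s, Δ s = Φinv (s + (1 - s) * stdPhi γ)) :
    HasDerivAt
      (fun a' : ℝ => a' * (Δ a') ^ k + (∫ s in a'..(1 - b), (Δ s) ^ k)
        + b * (Δ (1 - b)) ^ k)
      (a * (1 - stdPhi γ) * ((k : ℝ) * (Δ a) ^ (k - 1) / stdphi (Δ a))) a
    ∧ HasDerivAt
      (fun b' : ℝ => a * (Δ a) ^ k + (∫ s in a..(1 - b'), (Δ s) ^ k)
        + b' * (Δ (1 - b')) ^ k)
      (-(b * (1 - stdPhi γ) * ((k : ℝ) * (Δ (1 - b)) ^ (k - 1) / stdphi (Δ (1 - b))))) b := by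
  have hΔ' : ∀ s ∈ Ioo (0 : ℝ) 1, HasDerivAt Δ ((1 - stdPhi γ) / stdphi (Δ s)) s := by
    intro s hs
    simpa only [← hΔ, ← funext hΔ] using hasDerivAt_rightInvOn_stdPhi_comp hΦinv
      (stdPhi_pos γ).le (stdPhi_lt_one γ) hs
  have hF' : ∀ s ∈ Ioo (0 : ℝ) 1, HasDerivAt (fun s => Δ s ^ k)
      (k * Δ s ^ (k - 1) * ((1 - stdPhi γ) / stdphi (Δ s))) s :=
    fun s hs => (hΔ' s hs).pow k
  have hFcont : ContinuousOn (fun s => Δ s ^ k) (Ioo 0 1) :=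
    fun s hs => (hF' s hs).continuousAt.continuousWithinAt
  have hint : IntervalIntegrable (fun s => Δ s ^ k) volume a (1 - b) :=
    (hFcont.mono fun x hx => ⟨ha.trans_le hx.1, hx.2.trans_lt hb1⟩).intervalIntegrable_of_Icc
      hab.le
  have ha01 : a ∈ Ioo (0 : ℝ) 1 := ⟨ha, hab.trans hb1⟩
  have hb01 : 1 - b ∈ Ioo (0 : ℝ) 1 := ⟨ha.trans hab, hb1⟩
  have hmeas := hFcont.stronglyMeasurableAtFilter (μ := volume) isOpen_Ioo
  constructor
  · refine ((hasDerivAt_mul_self_add_integral (hF' a ha01) hint (hmeas a ha01)).add_const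
      _).congr_deriv ?_
    ring
  · have h := (hasDerivAt_integral_add_mul_self_one_sub (hF' (1 - b) hb01) hint
      (hmeas (1 - b) hb01)).const_add (a * Δ a ^ k)
    simp only [← add_assoc] at h
    exact h.congr_deriv (by ring)

theorem stmt18 (a b γ : ℝ) (k : ℕ) (hk : 1 ≤ k)
    (ha : 0 < a) (hab : a < 1 - b) (hb1 : 1 - b < 1)
    (Φinv : ℝ → ℝ) (hΦinv : ∀ v ∈ Set.Ioo (0 : ℝ) 1, stdPhi (Φinv v) = v)
    (Δ : ℝ → ℝ) (hΔ : ∀ s, Δ s = Φinv (s + (1 - s) * stdPhi γ)) :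
    HasDerivAt
      (fun a' : ℝ => a' * (Δ a') ^ k + (∫ s in a'..(1 - b), (Δ s) ^ k)
        + b * (Δ (1 - b)) ^ k)
      (a * (1 - stdPhi γ) * ((k : ℝ) * (Δ a) ^ (k - 1) / stdphi (Δ a))) a
    ∧ HasDerivAt
      (fun b' : ℝ => a * (Δ a) ^ k + (∫ s in a..(1 - b'), (Δ s) ^ k)
        + b' * (Δ (1 - b')) ^ k)
      (-(b * (1 - stdPhi γ) * ((k : ℝ) * (Δ (1 - b)) ^ (k - 1) / stdphi (Δ (1 - b))))) b :=
  stmt18_general a b γ k ha hab hb1 Φinv hΦinv Δ hΔ
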